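/- arXiv:1005.0929 — 4 statements merged into one kernel-verified Lean document; each statement's English description precedes it below -/
import Mathlib

section
/- The characteristic polynomial of the matrix X_n equals Q(x) = x^n + n q_1 x^{n-1} + n(n-1) q_2 x^{n-2} + ... + n! q_n, where the coefficient of x^{n-k} is n(n-1)⋯(n-k+1) q_k. -/
/-!
Expanding `det (X • 1 - X_{m+1})` along its last row, the lower Hessenberg shape of the matrix
gives the recursion `P_{m+1} = X P_m - ∑_{k+l=m} m(m-1)⋯(m-k+1) x_{k+1} P_l` for the
characteristic polynomials `P_m` of the leading blocks. The polynomials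
`Q_m = ∑_{k ≤ m} m(m-1)⋯(m-k+1) q_k X^{m-k}` satisfy the same recursion exactly because of
Newton's identities `k q_k = -∑_{t=1}^{k} x_t q_{k-t}`, and `P_0 = Q_0 = 1`.
-/

open Polynomial Matrix Finset

namespace Nat

theorem succ_descFactorial_succ_eq_add (m j : ℕ) :
    (m + 1).descFactorial (j + 1) = m.descFactorial (j + 1) + (j + 1) * m.descFactorial j := by
  rw [succ_descFactorial_succ, descFactorial_succ, ← Nat.add_mul]
  rcases le_or_gt j m with h | h
  · congr 1; omega
  · simp [descFactorial_eq_zero_iff_lt.mpr h]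

theorem descFactorial_mul_sub_descFactorial (m a b : ℕ) :
    m.descFactorial a * (m - a).descFactorial b = m.descFactorial (a + b) := by
  rw [Nat.mul_comm, ← descFactorial_mul_descFactorial (le_add_right a b), Nat.add_sub_cancel_left]

theorem prod_Ico_add_one_eq_descFactorial {l m : ℕ} (h : l ≤ m) :
    ∏ i ∈ Ico l m, (i + 1) = m.descFactorial (m - l) := by
  induction m, h using le_induction with
  | base => simp
  | succ m hlm ih =>
    rw [prod_Ico_succ_top hlm, ih, succ_sub hlm, succ_descFactorial_succ, Nat.mul_comm]

end Nat

theorem sum_antidiagonal_sum_antidiagonal_snd_comm {M : Type*} [AddCommMonoid M]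
    (F : ℕ → ℕ → ℕ → M) (m : ℕ) :
    ∑ x ∈ antidiagonal m, ∑ y ∈ antidiagonal x.2, F x.1 y.1 y.2 =
      ∑ x ∈ antidiagonal m, ∑ y ∈ antidiagonal x.2, F y.1 x.1 y.2 := by
  rw [sum_sigma', sum_sigma']
  refine sum_nbij' (fun z => ⟨(z.2.1, z.1.1 + z.2.2), (z.1.1, z.2.2)⟩)
    (fun z => ⟨(z.2.1, z.1.1 + z.2.2), (z.1.1, z.2.2)⟩) ?_ ?_ ?_ ?_ fun _ _ => rfl <;>
  · rintro ⟨⟨i, j⟩, ⟨a, b⟩⟩ h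
    simp only [mem_sigma, HasAntidiagonal.mem_antidiagonal, Sigma.mk.injEq, Prod.mk.injEq,
      heq_eq_eq, and_true, true_and] at h ⊢
    omega

section Hessenberg

-- The last row is arbitrary so that the induction closes: expanding along the last column
-- leaves a minor of the same shape, whose last row is `r`.
theorem det_updateRow_last_of_hessenberg {S : Type*} [CommRing S] (f : ℕ → ℕ → S)
    (hf : ∀ i j, i + 1 < j → f i j = 0) (r : ℕ → S) (m : ℕ) :
    ((of fun i j : Fin (m + 1) => f i j).updateRow (Fin.last m) fun j => r j).det =
      ∑ l ∈ range (m + 1), (-1) ^ (m - l) * r l * (∏ i ∈ Ico l m, f i (i + 1)) *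
        (of fun i j : Fin l => f i j).det := by
  induction m with
  | zero => simp [det_unique]
  | succ m ih =>
    set A := (of fun i j : Fin (m + 2) => f i j).updateRow (Fin.last (m + 1)) fun j => r j
    have h_last : A.submatrix (Fin.last (m + 1)).succAbove (Fin.last (m + 1)).succAbove =
        of fun i j : Fin (m + 1) => f i j := by
      ext i j
      simp [A, updateRow_apply, Fin.castSucc_ne_last]
    have h_pen : A.submatrix (Fin.last m).castSucc.succAbove (Fin.last (m + 1)).succAbove =
        (of fun i j : Fin (m + 1) => f i j).updateRow (Fin.last m) fun j => r j := by
      ext i j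
      cases i using Fin.lastCases with
      | last => simp [A]
      | cast i =>
        simp [A, Fin.succAbove_castSucc_of_lt _ _ (Fin.castSucc_lt_last i), Fin.castSucc_ne_last]
    have h_zero (i : Fin m) : A i.castSucc.castSucc (Fin.last (m + 1)) = 0 := by
      simpa [A, Fin.castSucc_ne_last] using hf _ _ (by omega)
    rw [det_succ_column A (Fin.last (m + 1)), Fin.sum_univ_castSucc, Fin.sum_univ_castSucc,
      sum_eq_zero fun i _ => by rw [h_zero, mul_zero, zero_mul], zero_add, h_last, h_pen, ih,
      sum_range_succ _ (m + 1), mul_sum]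
    have h_sign : ((-1 : S) ^ (m + (m + 1))) = -1 := Odd.neg_one_pow ⟨m, by ring⟩
    simp only [A, Fin.val_castSucc, Fin.val_last, h_sign, updateRow_self, updateRow_ne
      (Fin.castSucc_ne_last _), of_apply, ← two_mul, Even.neg_one_pow (even_two_mul _),
      Nat.sub_self, pow_zero, Ico_self, prod_empty, mul_one]
    congr 1
    refine sum_congr rfl fun l hl => ?_
    have hlm : l ≤ m := Nat.lt_succ_iff.mp (mem_range.mp hl)
    rw [prod_Ico_succ_top hlm, Nat.succ_sub hlm, pow_succ]
    ring

variable {R : Type*} [CommRing R]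

theorem charmatrix_of (a : ℕ → ℕ → R) (k : ℕ) :
    charmatrix (of fun i j : Fin k => a i j) =
      of fun i j : Fin k => (if (i : ℕ) = j then X else 0) - C (a i j) := by
  ext i j
  simp [charmatrix_apply, diagonal_apply, Fin.ext_iff]

theorem charpoly_of_hessenberg (a : ℕ → ℕ → R) (ha : ∀ i j, i + 1 < j → a i j = 0) (m : ℕ) :
    (of fun i j : Fin (m + 1) => a i j).charpoly =
      ∑ l ∈ range (m + 1), ((if l = m then X else 0) - C (a m l)) *
        C (∏ i ∈ Ico l m, a i (i + 1)) * (of fun i j : Fin l => a i j).charpoly := by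
  set f : ℕ → ℕ → R[X] := fun i j => (if i = j then X else 0) - C (a i j)
  have hf (i j : ℕ) (hij : i + 1 < j) : f i j = 0 := by
    simp [f, ha i j hij, show i ≠ j by omega]
  have h := det_updateRow_last_of_hessenberg f hf (f m) m
  rw [show (fun j : Fin (m + 1) => f m j) = (of fun i j : Fin (m + 1) => f i j) (Fin.last m)
    from rfl, updateRow_eq_self] at h
  simp only [charpoly, charmatrix_of]
  rw [h]
  refine sum_congr rfl fun l _ => ?_
  have h_super :
      ∏ i ∈ Ico l m, f i (i + 1) = (-1) ^ (m - l) * C (∏ i ∈ Ico l m, a i (i + 1)) := by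
    simp [f, prod_neg, map_prod]
  have h_sign : ((-1 : R[X]) ^ (m - l)) * (-1) ^ (m - l) = 1 := by
    rw [← mul_pow, neg_one_mul, neg_neg, one_pow]
  have h_row : f m l = (if l = m then X else 0) - C (a m l) := by simp only [f, eq_comm]
  rw [h_super, h_row]
  linear_combination (((if l = m then X else 0) - C (a m l)) *
    C (∏ i ∈ Ico l m, a i (i + 1)) * (of fun i j : Fin l => f i j).det) * h_sign

end Hessenberg

section Appell

variable {R : Type*} [CommRing R]

-- `appellPoly q m = ∑ j, q j • derivative^[j] (X ^ m)`, an Appell sequence.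
noncomputable def appellPoly (q : ℕ → R) (m : ℕ) : R[X] :=
  ∑ x ∈ antidiagonal m, C (m.descFactorial x.2 * q x.2) * X ^ x.1

theorem appellPoly_eq_add_sum_Icc (q : ℕ → R) (m : ℕ) :
    appellPoly q m =
      C (q 0) * X ^ m + ∑ k ∈ Icc 1 m, C (m.descFactorial k * q k) * X ^ (m - k) := by
  rw [appellPoly, ← Nat.sum_antidiagonal_swap, Nat.sum_antidiagonal_eq_sum_range_succ_mk,
    range_eq_Ico, sum_eq_sum_Ico_succ_bot m.succ_pos, zero_add, Nat.succ_eq_add_one,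
    Ico_add_one_right_eq_Icc]
  simp

theorem X_mul_appellPoly (q : ℕ → R) (m : ℕ) :
    X * appellPoly q m =
      ∑ x ∈ antidiagonal (m + 1), C (m.descFactorial x.2 * q x.2) * X ^ x.1 := by
  rw [Nat.sum_antidiagonal_succ, Nat.descFactorial_eq_zero_iff_lt.mpr m.lt_succ_self,
    appellPoly, mul_sum]
  simp only [Nat.cast_zero, zero_mul, map_zero, zero_add, pow_succ]
  exact sum_congr rfl fun _ _ => by ring

theorem appellPoly_succ (q : ℕ → R) (m : ℕ) :
    appellPoly q (m + 1) = X * appellPoly q m +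
      ∑ x ∈ antidiagonal m, C ((x.2 + 1) * m.descFactorial x.2 * q (x.2 + 1)) * X ^ x.1 := by
  rw [X_mul_appellPoly, appellPoly, Nat.sum_antidiagonal_succ', Nat.sum_antidiagonal_succ',
    add_assoc, ← sum_add_distrib]
  simp only [Nat.descFactorial_zero, Nat.succ_descFactorial_succ_eq_add]
  congr 1
  refine sum_congr rfl fun x _ => ?_
  push_cast
  rw [← add_mul, ← C_add]
  congr 2
  ring

theorem appellPoly_succ_of_newton (p q : ℕ → R)
    (hq : ∀ j : ℕ, (j + 1 : R) * q (j + 1) = -∑ x ∈ antidiagonal j, p (x.1 + 1) * q x.2)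
    (m : ℕ) :
    appellPoly q (m + 1) = X * appellPoly q m -
      ∑ x ∈ antidiagonal m, C (m.descFactorial x.1 * p (x.1 + 1)) * appellPoly q x.2 := by
  set F : ℕ → ℕ → ℕ → R[X] := fun i a b => C (m.descFactorial (a + b) * p (a + 1) * q b) * X ^ i
  have h_newton :
      ∑ x ∈ antidiagonal m, C ((x.2 + 1) * m.descFactorial x.2 * q (x.2 + 1)) * X ^ x.1 =
        -∑ x ∈ antidiagonal m, ∑ y ∈ antidiagonal x.2, F x.1 y.1 y.2 := by
    rw [← sum_neg_distrib]
    refine sum_congr rfl fun x _ => ?_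
    rw [mul_comm _ (m.descFactorial x.2 : R), mul_assoc, hq, mul_neg, mul_sum, map_neg, map_sum,
      neg_mul, sum_mul, neg_inj]
    refine sum_congr rfl fun y hy => ?_
    simp only [F, HasAntidiagonal.mem_antidiagonal.mp hy, mul_assoc]
  have h_expand :
      ∑ x ∈ antidiagonal m, C (m.descFactorial x.1 * p (x.1 + 1)) * appellPoly q x.2 =
        ∑ x ∈ antidiagonal m, ∑ y ∈ antidiagonal x.2, F y.1 x.1 y.2 := by
    refine sum_congr rfl fun x hx => ?_
    have hx₂ : x.2 = m - x.1 := by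
      rw [← HasAntidiagonal.mem_antidiagonal.mp hx, Nat.add_sub_cancel_left]
    rw [appellPoly, mul_sum]
    refine sum_congr rfl fun y _ => ?_
    rw [hx₂, ← mul_assoc, ← C_mul]
    simp only [F, ← Nat.descFactorial_mul_sub_descFactorial, Nat.cast_mul]
    congr 2
    ring
  rw [appellPoly_succ, h_newton, h_expand, sum_antidiagonal_sum_antidiagonal_snd_comm,
    sub_eq_add_neg]

end Appell

section NewtonMatrix

variable {R : Type*} [CommRing R]

-- With `0`-based indices the paper's superdiagonal entry `(X_n)_{i,i+1} = i` sits at `(i - 1, i)`,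
-- so it equals the column index `j`.
def newtonEntry (p : ℕ → R) (i j : ℕ) : R :=
  if j ≤ i then p (i - j + 1) else if j = i + 1 then (j : R) else 0

def newtonMatrix (p : ℕ → R) (m : ℕ) : Matrix (Fin m) (Fin m) R :=
  of fun i j => newtonEntry p i j

theorem charpoly_newtonMatrix_succ (p : ℕ → R) (m : ℕ) :
    (newtonMatrix p (m + 1)).charpoly = X * (newtonMatrix p m).charpoly -
      ∑ x ∈ antidiagonal m,
        C (m.descFactorial x.1 * p (x.1 + 1)) * (newtonMatrix p x.2).charpoly := by
  have h_hess (i j : ℕ) (hij : i + 1 < j) : newtonEntry p i j = 0 := by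
    simp [newtonEntry, show ¬ j ≤ i by omega, show j ≠ i + 1 by omega]
  have h_term (l : ℕ) (hl : l ∈ range (m + 1)) :
      ((if l = m then X else 0) - C (newtonEntry p m l)) *
        C (∏ i ∈ Ico l m, newtonEntry p i (i + 1)) * (newtonMatrix p l).charpoly =
      (if l = m then X * (newtonMatrix p m).charpoly else 0) -
        C (m.descFactorial (m - l) * p (m - l + 1)) * (newtonMatrix p l).charpoly := by
    have hlm : l ≤ m := Nat.lt_succ_iff.mp (mem_range.mp hl)
    have h_super : ∏ i ∈ Ico l m, newtonEntry p i (i + 1) = m.descFactorial (m - l) := by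
      simp [newtonEntry, ← Nat.prod_Ico_add_one_eq_descFactorial hlm]
    rw [h_super, newtonEntry, if_pos hlm]
    split_ifs with h
    · subst h; simp [sub_mul]
    · simp only [zero_sub, C_mul, map_natCast]; ring
  refine (charpoly_of_hessenberg _ h_hess m).trans ((sum_congr rfl h_term).trans ?_)
  rw [sum_sub_distrib, sum_ite_eq', if_pos (self_mem_range_succ m),
    ← Nat.sum_antidiagonal_swap, Nat.sum_antidiagonal_eq_sum_range_succ_mk]
  rfl

theorem charpoly_newtonMatrix_eq_appellPoly (p q : ℕ → R) (hq₀ : q 0 = 1)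
    (hq : ∀ j : ℕ, (j + 1 : R) * q (j + 1) = -∑ x ∈ antidiagonal j, p (x.1 + 1) * q x.2)
    (m : ℕ) :
    (newtonMatrix p m).charpoly = appellPoly q m := by
  induction m using Nat.strong_induction_on with
  | _ m ih =>
    rcases m with _ | m
    · simp [appellPoly, hq₀]
    · rw [charpoly_newtonMatrix_succ, appellPoly_succ_of_newton p q hq, ih m m.lt_succ_self]
      congr 1
      refine sum_congr rfl fun x hx => ?_
      rw [ih x.2 (by have := HasAntidiagonal.mem_antidiagonal.mp hx; omega)]

end NewtonMatrix

section Roots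

variable {R σ : Type*} [CommRing R] [Fintype σ] (μ : σ → R)

theorem coeff_prod_X_sub_C_card_sub {k : ℕ} (hk : k ≤ Fintype.card σ) :
    (∏ i, (X - C (μ i))).coeff (Fintype.card σ - k) = (-1) ^ k * (univ.val.map μ).esymm k := by
  have h_card : Multiset.card (univ.val.map μ) = Fintype.card σ := by simp
  have h_prod : ∏ i, (X - C (μ i)) = ((univ.val.map μ).map fun t => X - C t).prod := by
    rw [Multiset.map_map]; rfl
  rw [h_prod, Multiset.prod_X_sub_C_coeff _ (by omega), h_card, Nat.sub_sub_self hk]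

theorem newton_identity_signed_esymm (j : ℕ) :
    (j + 1 : R) * ((-1) ^ (j + 1) * (univ.val.map μ).esymm (j + 1)) =
      -∑ x ∈ antidiagonal j,
        (∑ i, μ i ^ (x.1 + 1)) * ((-1) ^ x.2 * (univ.val.map μ).esymm x.2) := by
  have h := congrArg (MvPolynomial.aeval μ) (MvPolynomial.mul_esymm_eq_sum σ R (j + 1))
  simp only [map_mul, map_sum, map_pow, map_neg, map_one, map_natCast,
    MvPolynomial.aeval_esymm_eq_multiset_esymm, MvPolynomial.psum, MvPolynomial.aeval_X] at h
  rw [sum_filter, Nat.sum_antidiagonal_succ', if_neg (lt_irrefl _), zero_add,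
    ← Nat.sum_antidiagonal_swap] at h
  rw [sum_congr rfl fun x hx => by
    have := HasAntidiagonal.mem_antidiagonal.mp hx
    rw [if_pos (by simp only [Prod.fst_swap]; omega), mul_comm]] at h
  simp only [Prod.fst_swap, Prod.snd_swap] at h
  push_cast at h
  have h_sign : ((-1 : R) ^ (j + 1)) * (-1) ^ (j + 1) = 1 := by
    rw [← mul_pow, neg_one_mul, neg_neg, one_pow]
  linear_combination (-1) ^ (j + 1) * h - (∑ x ∈ antidiagonal j,
    (∑ i, μ i ^ (x.1 + 1)) * ((-1) ^ x.2 * (univ.val.map μ).esymm x.2)) * h_sign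

end Roots

/-- The characteristic polynomial of X_n is
    Q(x) = x^n + n q₁ x^{n-1} + n(n-1) q₂ x^{n-2} + ... + n! qₙ,
    where q_k is the coefficient of x^{n-k} in ∏(x - μᵢ). -/
theorem charpoly_newton_matrix (n : ℕ) (μ : Fin n → ℂ)
    (x : ℕ → ℂ) (hx : ∀ k, x k = ∑ i, μ i ^ k)
    (Xn : Matrix (Fin n) (Fin n) ℂ)
    (hXn : ∀ i j : Fin n, Xn i j =
      if (j : ℕ) ≤ (i : ℕ) then x ((i : ℕ) - (j : ℕ) + 1)
      else if (j : ℕ) = (i : ℕ) + 1 then ((j : ℕ) : ℂ) else 0) :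
    Xn.charpoly = X ^ n + ∑ k ∈ Finset.Icc 1 n,
      C ((n.descFactorial k : ℂ) * (∏ i, (X - C (μ i))).coeff (n - k)) * X ^ (n - k) := by
  have h_Xn : Xn = newtonMatrix x n := ext hXn
  set q : ℕ → ℂ := fun k => (-1) ^ k * (univ.val.map μ).esymm k
  have h_q₀ : q 0 = 1 := by simp [q, Multiset.esymm]
  have h_newton (j : ℕ) :
      (j + 1 : ℂ) * q (j + 1) = -∑ y ∈ antidiagonal j, x (y.1 + 1) * q y.2 := by
    simpa only [hx] using newton_identity_signed_esymm μ j
  have h_coeff (k : ℕ) (hk : k ∈ Icc 1 n) : (∏ i, (X - C (μ i))).coeff (n - k) = q k := by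
    simpa only [Fintype.card_fin] using
      coeff_prod_X_sub_C_card_sub μ (k := k) (by simpa using (mem_Icc.mp hk).2)
  rw [h_Xn, charpoly_newtonMatrix_eq_appellPoly x q h_q₀ h_newton, appellPoly_eq_add_sum_Icc,
    h_q₀, C_1, one_mul, sum_congr rfl fun k hk => by rw [← h_coeff k hk]]
end

section
/- If ρ > (2 cos(π/10))^{1/9}, then all power sums s_k = ρ^k + 2 cos(kπ/10), k = 1, 2, 3, ..., of the list (ρ, e^{iπ/10}, e^{-iπ/10}) are positive. -/
set_option maxHeartbeats 1000000


/-- If ρ > (2 cos(π/10))^{1/9}, then all power sums s_k = ρ^k + 2cos(kπ/10) of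
    the list (ρ, e^{iπ/10}, e^{-iπ/10}) are positive. -/
theorem example_power_sums_positive (ρ : ℝ)
    (hρ : (2 * Real.cos (Real.pi / 10)) ^ ((1 : ℝ) / 9) < ρ) :
    ∀ k : ℕ, 1 ≤ k → 0 < ρ ^ k + 2 * Real.cos (k * Real.pi / 10) := by
  have pi_pos := Real.pi_pos
  have pi_lt := Real.pi_lt_d2
  set s : ℝ := Real.sqrt 5 with hs
  set c : ℝ := 2 * Real.cos (Real.pi / 10) with hcdef
  have hs5 : s ^ 2 = 5 := Real.sq_sqrt (by norm_num)
  have hs2 : 2 < s := by nlinarith [Real.sqrt_nonneg 5]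
  have hs3 : s < 3 := by nlinarith [Real.sqrt_nonneg 5]
  have hcos5 : Real.cos (Real.pi / 5) = (1 + s) / 4 := Real.cos_pi_div_five
  have hdouble : Real.cos (Real.pi / 5) = 2 * Real.cos (Real.pi / 10) ^ 2 - 1 := by
    rw [show Real.pi / 5 = 2 * (Real.pi / 10) by ring, Real.cos_two_mul]
  have hc2 : c ^ 2 = (5 + s) / 2 := by
    rw [hcdef]; linear_combination -2 * hdouble + 2 * hcos5
  have hcpos : 0 < c := by
    have : 0 < Real.cos (Real.pi / 10) :=
      Real.cos_pos_of_mem_Ioo ⟨by linarith, by linarith⟩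
    rw [hcdef]; linarith
  have hc1 : 1 < c := by nlinarith
  -- ρ > 1
  have hr1 : 1 < ρ := by
    have h19 : (1 : ℝ) ≤ c ^ ((1 : ℝ) / 9) :=
      Real.one_le_rpow hc1.le (by norm_num)
    linarith
  have hr0 : 0 < ρ := by linarith
  -- ρ^9 > c
  have hc9 : c < ρ ^ 9 := by
    have h0 : 0 ≤ c ^ ((1 : ℝ) / 9) := Real.rpow_nonneg hcpos.le _
    have h := pow_lt_pow_left₀ hρ h0 (by norm_num : (9:ℕ) ≠ 0)
    rwa [← Real.rpow_natCast (c ^ ((1 : ℝ) / 9)) 9, ← Real.rpow_mul hcpos.le,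
      show (1 : ℝ) / 9 * (9 : ℕ) = 1 by norm_num, Real.rpow_one] at h
  -- key polynomial identities
  have E1 : ((5 + s) / 2) ^ 4 = (175 + 75 * s) / 2 := by
    linear_combination (155 / 16 + 5 / 4 * s + 1 / 16 * s ^ 2) * hs5
  have E2 : ((1 + s) / 2) ^ 9 = 38 + 17 * s := by
    linear_combination (3891 / 512 + 1739 / 512 * s + 771 / 512 * s ^ 2 + 331 / 512 * s ^ 3
      + 129 / 512 * s ^ 4 + 41 / 512 * s ^ 5 + 9 / 512 * s ^ 6 + 1 / 512 * s ^ 7) * hs5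
  have E3 : ((5 + s) / 2) ^ 5 = (625 + 275 * s) / 2 := by
    linear_combination (1375 / 32 + 255 / 32 * s + 25 / 32 * s ^ 2 + 1 / 32 * s ^ 3) * hs5
  -- t := 2 sin(π/5)
  set t : ℝ := 2 * Real.sin (Real.pi / 5) with htdef
  have ht0 : 0 ≤ t := by
    have : 0 ≤ Real.sin (Real.pi / 5) := Real.sin_nonneg_of_nonneg_of_le_pi
      (by linarith) (by linarith)
    rw [htdef]; linarith
  have ht2 : t ^ 2 = (5 - s) / 2 := by
    have h := Real.sin_sq_add_cos_sq (Real.pi / 5)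
    rw [htdef]; linear_combination 4 * h - (4 * Real.cos (Real.pi / 5) + (1 + s)) * hcos5
      - 1 / 4 * hs5
  have ht13 : t < 13 / 10 := by
    have h := Real.sin_le (show (0:ℝ) ≤ Real.pi / 5 by linarith)
    rw [htdef]; linarith
  -- ρ^6 > t
  have hr6 : t < ρ ^ 6 := by
    refine lt_of_pow_lt_pow_left₀ 3 (by positivity) ?_
    have h1 : c ^ 2 < (ρ ^ 9) ^ 2 := pow_lt_pow_left₀ hc9 hcpos.le (by norm_num : (2:ℕ) ≠ 0)
    have h2 : t ^ 3 < c ^ 2 := by nlinarith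
    calc t ^ 3 < c ^ 2 := h2
      _ < (ρ ^ 9) ^ 2 := h1
      _ = (ρ ^ 6) ^ 3 := by ring
  -- ρ^8 > (1+s)/2
  have hr8 : (1 + s) / 2 < ρ ^ 8 := by
    refine lt_of_pow_lt_pow_left₀ 9 (by positivity) ?_
    have h1 : c ^ 8 < (ρ ^ 9) ^ 8 := pow_lt_pow_left₀ hc9 hcpos.le (by norm_num : (8:ℕ) ≠ 0)
    calc ((1 + s) / 2) ^ 9 = 38 + 17 * s := E2
      _ ≤ (175 + 75 * s) / 2 := by linarith
      _ = ((5 + s) / 2) ^ 4 := E1.symm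
      _ = (c ^ 2) ^ 4 := by rw [hc2]
      _ = c ^ 8 := by ring
      _ < (ρ ^ 9) ^ 8 := h1
      _ = (ρ ^ 8) ^ 9 := by ring
  -- ρ^10 > 2
  have hr10 : (2 : ℝ) < ρ ^ 10 := by
    refine lt_of_pow_lt_pow_left₀ 9 (by positivity) ?_
    have h1 : c ^ 10 < (ρ ^ 9) ^ 10 := pow_lt_pow_left₀ hc9 hcpos.le (by norm_num : (10:ℕ) ≠ 0)
    calc (2 : ℝ) ^ 9 = 512 := by norm_num
      _ ≤ (625 + 275 * s) / 2 := by linarith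
      _ = ((5 + s) / 2) ^ 5 := E3.symm
      _ = (c ^ 2) ^ 5 := by rw [hc2]
      _ = c ^ 10 := by ring
      _ < (ρ ^ 9) ^ 10 := h1
      _ = (ρ ^ 10) ^ 9 := by ring
  have hcos7 : Real.cos (7 * Real.pi / 10) = - Real.sin (Real.pi / 5) := by
    rw [show 7 * Real.pi / 10 = Real.pi - (Real.pi / 2 - Real.pi / 5) by ring,
      Real.cos_pi_sub, Real.cos_pi_div_two_sub]
  intro k hk
  rcases lt_or_ge k 10 with h10 | h10
  · interval_cases k
    · have hx : 0 ≤ Real.cos ((1 : ℕ) * Real.pi / 10) :=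
        Real.cos_nonneg_of_mem_Icc ⟨by push_cast; nlinarith, by push_cast; nlinarith⟩
      nlinarith [pow_pos hr0 1]
    · have hx : 0 ≤ Real.cos ((2 : ℕ) * Real.pi / 10) :=
        Real.cos_nonneg_of_mem_Icc ⟨by push_cast; nlinarith, by push_cast; nlinarith⟩
      nlinarith [pow_pos hr0 2]
    · have hx : 0 ≤ Real.cos ((3 : ℕ) * Real.pi / 10) :=
        Real.cos_nonneg_of_mem_Icc ⟨by push_cast; nlinarith, by push_cast; nlinarith⟩
      nlinarith [pow_pos hr0 3]
    · have hx : 0 ≤ Real.cos ((4 : ℕ) * Real.pi / 10) :=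
        Real.cos_nonneg_of_mem_Icc ⟨by push_cast; nlinarith, by push_cast; nlinarith⟩
      nlinarith [pow_pos hr0 4]
    · have hx : 0 ≤ Real.cos ((5 : ℕ) * Real.pi / 10) :=
        Real.cos_nonneg_of_mem_Icc ⟨by push_cast; nlinarith, by push_cast; nlinarith⟩
      nlinarith [pow_pos hr0 5]
    · -- k = 6
      have h67 : Real.cos (7 * Real.pi / 10) ≤ Real.cos ((6 : ℕ) * Real.pi / 10) := by
        push_cast
        apply Real.cos_le_cos_of_nonneg_of_le_pi (by linarith) (by linarith) (by linarith)
      rw [hcos7] at h67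
      have : t < ρ ^ 6 := hr6
      rw [htdef] at this
      push_cast at h67 ⊢
      linarith
    · -- k = 7
      have h7 : Real.cos ((7 : ℕ) * Real.pi / 10) = - Real.sin (Real.pi / 5) := by
        push_cast; exact hcos7
      have hr7 : t < ρ ^ 7 := by
        have : ρ ^ 6 * 1 < ρ ^ 6 * ρ := by
          apply mul_lt_mul_of_pos_left hr1 (pow_pos hr0 6)
        calc t < ρ ^ 6 := hr6
          _ = ρ ^ 6 * 1 := by ring
          _ < ρ ^ 6 * ρ := this
          _ = ρ ^ 7 := by ring
      rw [h7]; rw [htdef] at hr7; linarith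
    · -- k = 8
      have h8 : Real.cos ((8 : ℕ) * Real.pi / 10) = - Real.cos (Real.pi / 5) := by
        push_cast
        rw [show 8 * Real.pi / 10 = Real.pi - Real.pi / 5 by ring, Real.cos_pi_sub]
      rw [h8, hcos5]; linarith
    · -- k = 9
      have h9 : Real.cos ((9 : ℕ) * Real.pi / 10) = - Real.cos (Real.pi / 10) := by
        push_cast
        rw [show 9 * Real.pi / 10 = Real.pi - Real.pi / 10 by ring, Real.cos_pi_sub]
      rw [h9]; rw [hcdef] at hc9; linarith
  · -- k ≥ 10
    have hk10 : ρ ^ 10 ≤ ρ ^ k := pow_le_pow_right₀ hr1.le h10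
    have hcb : -1 ≤ Real.cos ((k : ℝ) * Real.pi / 10) := Real.neg_one_le_cos _
    linarith
end

section
/- (JLL inequality) If A is an entrywise nonnegative n×n real matrix with s_k = trace(A^k), then for all positive integers k and m, n^{k-1} s_{km} ≥ (s_m)^k. -/
open Matrix

lemma pow_entry_nonneg {n : ℕ} (A : Matrix (Fin n) (Fin n) ℝ)
    (hA : ∀ i j, 0 ≤ A i j) (p : ℕ) : ∀ i j, 0 ≤ (A ^ p) i j := by
  induction p with
  | zero =>
    intro i j
    simp only [pow_zero, Matrix.one_apply]
    split <;> norm_num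
  | succ p ih =>
    intro i j
    rw [pow_succ, Matrix.mul_apply]
    exact Finset.sum_nonneg fun t _ => mul_nonneg (ih i t) (hA t j)

lemma diag_pow_le {n : ℕ} (B : Matrix (Fin n) (Fin n) ℝ)
    (hB : ∀ i j, 0 ≤ B i j) (k : ℕ) (hk : 1 ≤ k) (i : Fin n) :
    (B i i) ^ k ≤ (B ^ k) i i := by
  induction k with
  | zero => omega
  | succ k ih =>
    rcases Nat.eq_or_lt_of_le hk with h | h
    · simp [← h]
    · have hk' : 1 ≤ k := by omega
      have h1 := ih hk'
      rw [pow_succ, pow_succ, Matrix.mul_apply]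
      calc B i i ^ k * B i i ≤ (B ^ k) i i * B i i :=
            mul_le_mul_of_nonneg_right h1 (hB i i)
        _ ≤ ∑ t, (B ^ k) i t * B t i := by
            apply Finset.single_le_sum (f := fun t => (B ^ k) i t * B t i)
              (fun t _ => mul_nonneg (pow_entry_nonneg B hB k i t) (hB t i))
              (Finset.mem_univ i)

/-- JLL inequality: if A is an entrywise nonnegative n×n real matrix and
    s_j = trace(A^j), then n^{k-1} s_{km} ≥ (s_m)^k for all positive integers k, m. -/
theorem jll_inequality (n : ℕ) (A : Matrix (Fin n) (Fin n) ℝ)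
    (hA : ∀ i j, 0 ≤ A i j) (k m : ℕ) (hk : 1 ≤ k) (hm : 1 ≤ m) :
    ((A ^ m).trace) ^ k ≤ (n : ℝ) ^ (k - 1) * (A ^ (k * m)).trace := by
  set B := A ^ m with hBdef
  have hB : ∀ i j, 0 ≤ B i j := pow_entry_nonneg A hA m
  rcases Nat.eq_zero_or_pos n with hn | hn
  · subst hn
    have : (A ^ m).trace = 0 := by simp [Matrix.trace]
    rw [this, zero_pow (by omega)]
    have : (A ^ (k * m)).trace = 0 := by simp [Matrix.trace]
    rw [this]
    simp
  -- trace (B^k) ≥ ∑ (B i i)^k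
  have h1 : ∑ i, (B i i) ^ k ≤ (B ^ k).trace := by
    unfold Matrix.trace
    exact Finset.sum_le_sum fun i _ => diag_pow_le B hB k hk i
  -- power mean
  have h2 : (∑ i, B i i) ^ k / (n : ℝ) ^ (k - 1) ≤ ∑ i, (B i i) ^ k := by
    have := pow_sum_div_card_le_sum_pow (s := Finset.univ)
      (f := fun i : Fin n => B i i) (fun i _ => hB i i) (k - 1)
    simpa [Nat.sub_add_cancel hk] using this
  have hnpos : (0 : ℝ) < (n : ℝ) ^ (k - 1) := by positivity
  have htr : B.trace = ∑ i, B i i := rfl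
  have hpow : A ^ (k * m) = B ^ k := by rw [hBdef, ← pow_mul, Nat.mul_comm]
  rw [hpow, htr]
  calc (∑ i, B i i) ^ k = (n : ℝ) ^ (k - 1) * ((∑ i, B i i) ^ k / (n : ℝ) ^ (k - 1)) := by
        field_simp
    _ ≤ (n : ℝ) ^ (k - 1) * (∑ i, (B i i) ^ k) :=
        mul_le_mul_of_nonneg_left (le_trans h2 le_rfl) hnpos.le
    _ ≤ (n : ℝ) ^ (k - 1) * (B ^ k).trace :=
        mul_le_mul_of_nonneg_left h1 hnpos.le
end

section
/- (Suleimanova/Friedland) Let λ_1 ≥ 0 and λ_2, ..., λ_n ≤ 0 be real numbers with λ_1 + λ_2 + ... + λ_n ≥ 0. Then the companion matrix of f(x) = ∏_{i=1}^n (x - λ_i) has all entries nonnegative; in particular (λ_1,...,λ_n) is the spectrum of a nonnegative matrix. -/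
/-!
Write `f = (X - λ₁) ∏_{i ≥ 2} (X - λᵢ)`. Multiplying in the factors `X - λᵢ` with `λᵢ ≤ 0` one
at a time keeps every coefficient below the leading one nonpositive: the new coefficients are
`q_{k-1} - λᵢ q_k`, and the only one not of this form, the coefficient just below the top, is
`-(λ₁ + ⋯)`, which is nonpositive because every partial sum `λ₁ + ∑_{i ∈ S} λᵢ` dominates the
full sum. This is exactly nonnegativity of the companion matrix. That its characteristic
polynomial is `f` holds for any monic `f` over a commutative ring: the transposed companion
matrix is the matrix of multiplication by the root in the power basis of `R[X]/(f)`, so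
Cayley–Hamilton gives `f ∣ charpoly`, and both are monic of the same degree.
-/

open Polynomial Matrix

namespace Polynomial

section Coefficients

variable {R : Type*} [CommRing R] [LinearOrder R] [IsStrictOrderedRing R]

theorem coeff_prod_X_sub_C_cons_nonpos {a : R} {s : Multiset R} (hs : ∀ x ∈ s, x ≤ 0)
    (hsum : 0 ≤ a + s.sum) :
    ∀ k ≤ Multiset.card s, ((a ::ₘ s).map (X - C ·)).prod.coeff k ≤ 0 := by
  induction s using Multiset.induction with
  | empty =>
    intro k hk
    obtain rfl : k = 0 := by simpa using hk
    simpa using hsum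
  | cons μ s ih =>
    have hμ : μ ≤ 0 := hs μ (Multiset.mem_cons_self μ s)
    rw [Multiset.sum_cons] at hsum
    have ih := ih (fun x hx => hs x (Multiset.mem_cons_of_mem hx)) (by linarith)
    intro k hk
    rw [Multiset.card_cons] at hk
    obtain hk | rfl := Nat.lt_or_eq_of_le hk
    · rw [Multiset.cons_swap, Multiset.map_cons, Multiset.prod_cons]
      cases k with
      | zero =>
        rw [mul_coeff_zero]
        simpa using mul_nonpos_of_nonneg_of_nonpos (neg_nonneg.2 hμ) (ih 0 (Nat.zero_le _))
      | succ i =>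
        rw [coeff_X_sub_C_mul]
        have hμq := mul_nonneg_of_nonpos_of_nonpos hμ (ih (i + 1) (Nat.le_of_lt_succ hk))
        linarith [ih i (by omega)]
    · have htop := multiset_prod_X_sub_C_coeff_card_pred (a ::ₘ μ ::ₘ s) (by simp)
      simp only [Multiset.card_cons, add_tsub_cancel_right, Multiset.sum_cons] at htop
      rw [htop]
      linarith

theorem coeff_prod_X_sub_C_nonpos {ι : Type*} [Fintype ι] (lam : ι → R) (i₀ : ι)
    (hneg : ∀ i, i ≠ i₀ → lam i ≤ 0) (hsum : 0 ≤ ∑ i, lam i) {k : ℕ}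
    (hk : k < Fintype.card ι) : (∏ i, (X - C (lam i))).coeff k ≤ 0 := by
  classical
  have hprod : ∏ i, (X - C (lam i)) =
      ((lam i₀ ::ₘ (Finset.univ.erase i₀).val.map lam).map (X - C ·)).prod := by
    rw [← Finset.mul_prod_erase _ _ (Finset.mem_univ i₀), Multiset.map_cons, Multiset.prod_cons,
      Multiset.map_map, Finset.prod_eq_multiset_prod]
    rfl
  rw [hprod]
  refine coeff_prod_X_sub_C_cons_nonpos ?_ ?_ k ?_
  · intro x hx
    obtain ⟨i, hi, rfl⟩ := Multiset.mem_map.1 hx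
    exact hneg i (Finset.ne_of_mem_erase hi)
  · rwa [← Finset.sum_eq_multiset_sum, Finset.add_sum_erase _ _ (Finset.mem_univ i₀)]
  · rw [Multiset.card_map, Finset.card_val, Finset.card_erase_of_mem (Finset.mem_univ i₀),
      Finset.card_univ]
    omega

end Coefficients

variable {R : Type*} [CommRing R]

def companion (f : R[X]) (n : ℕ) : Matrix (Fin n) (Fin n) R :=
  Matrix.of fun i j => if (j : ℕ) = i + 1 then 1 else if (i : ℕ) = n - 1 then -f.coeff j else 0

theorem companion_nonneg [PartialOrder R] [IsOrderedRing R] {f : R[X]} {n : ℕ}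
    (hf : ∀ k < n, f.coeff k ≤ 0) (i j : Fin n) : 0 ≤ companion f n i j := by
  simp only [companion, of_apply]
  split_ifs
  exacts [zero_le_one, neg_nonneg.2 (hf j j.2), le_rfl]

theorem Monic.X_pow_natDegree_modByMonic [Nontrivial R] {f : R[X]} (hf : f.Monic) :
    X ^ f.natDegree %ₘ f = X ^ f.natDegree - f := by
  rw [modByMonic_eq_of_dvd_sub hf (p₂ := X ^ f.natDegree - f) (by simp),
    (modByMonic_eq_self_iff hf).2]
  rw [← neg_sub, degree_neg]
  exact degree_sub_lt_left (by rw [degree_X_pow, degree_eq_natDegree hf.ne_zero]) hf.ne_zero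
    (by rw [hf.leadingCoeff, leadingCoeff_X_pow])

theorem leftMulMatrix_root_eq_companion_transpose {f : R[X]} (hf : f.Monic) :
    Algebra.leftMulMatrix (AdjoinRoot.powerBasisAux' hf) (AdjoinRoot.root f) =
      (companion f f.natDegree)ᵀ := by
  ext i j
  nontriviality R
  have hb : AdjoinRoot.powerBasisAux' hf j = AdjoinRoot.root f ^ (j : ℕ) :=
    (AdjoinRoot.powerBasis' hf).basis_eq_pow j
  rw [Algebra.leftMulMatrix_eq_repr_mul, hb, ← pow_succ', ← AdjoinRoot.mk_X, ← map_pow,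
    AdjoinRoot.powerBasisAux'_repr_apply_to_fun, AdjoinRoot.modByMonicHom_mk]
  simp only [transpose_apply, companion, of_apply]
  obtain hj | hj : (j : ℕ) + 1 < f.natDegree ∨ (j : ℕ) + 1 = f.natDegree := by omega
  · rw [(modByMonic_eq_self_iff hf).2]
    · simp [coeff_X_pow, show (j : ℕ) ≠ f.natDegree - 1 by omega]
    · rwa [degree_X_pow, degree_eq_natDegree hf.ne_zero, Nat.cast_lt]
  · rw [hj, hf.X_pow_natDegree_modByMonic]
    simp [coeff_X_pow, i.2.ne, show (j : ℕ) = f.natDegree - 1 by omega]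

theorem charpoly_companion {f : R[X]} (hf : f.Monic) {n : ℕ} (hn : f.natDegree = n) :
    (companion f n).charpoly = f := by
  subst hn
  nontriviality R
  have hdvd : f ∣ (companion f f.natDegree).charpoly := by
    rw [← AdjoinRoot.mk_eq_zero, ← AdjoinRoot.aeval_eq, ← charpoly_transpose]
    apply Algebra.leftMulMatrix_injective (AdjoinRoot.powerBasisAux' hf)
    rw [map_zero, ← aeval_algHom_apply, leftMulMatrix_root_eq_companion_transpose]
    exact aeval_self_charpoly _
  refine eq_of_monic_of_dvd_of_natDegree_le hf (charpoly_monic _) hdvd ?_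
  rw [charpoly_natDegree_eq_dim, Fintype.card_fin]

end Polynomial

theorem suleimanova_general (n : ℕ) (hn : 0 < n) (lam : Fin n → ℝ)
    (hneg : ∀ i : Fin n, i ≠ ⟨0, hn⟩ → lam i ≤ 0)
    (hsum : 0 ≤ ∑ i, lam i)
    (f : Polynomial ℝ) (hf : f = ∏ i, (X - C (lam i)))
    (Cmat : Matrix (Fin n) (Fin n) ℝ)
    (hC : ∀ i j : Fin n, Cmat i j =
      if (j : ℕ) = (i : ℕ) + 1 then 1
      else if (i : ℕ) = n - 1 then -f.coeff (j : ℕ) else 0) :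
    (∀ i j, 0 ≤ Cmat i j) ∧ Cmat.charpoly = f := by
  obtain rfl : Cmat = companion f n := Matrix.ext hC
  have hmonic : f.Monic := hf ▸ monic_prod_of_monic _ _ fun i _ => monic_X_sub_C (lam i)
  have hdeg : f.natDegree = n := by
    rw [hf, natDegree_finsetProd_X_sub_C_eq_card, Finset.card_univ, Fintype.card_fin]
  refine ⟨companion_nonneg fun k hk => ?_, charpoly_companion hmonic hdeg⟩
  rw [hf]
  exact coeff_prod_X_sub_C_nonpos lam ⟨0, hn⟩ hneg hsum (by simpa using hk)

/-- Suleimanova/Friedland: if λ₁ ≥ 0 ≥ λ₂,...,λₙ and λ₁ + ... + λₙ ≥ 0, then the companion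
    matrix of f(x) = ∏(x - λᵢ) is entrywise nonnegative; in particular (λ₁,...,λₙ) is the
    spectrum of a nonnegative matrix. -/
theorem suleimanova (n : ℕ) (hn : 0 < n) (lam : Fin n → ℝ)
    (h0 : 0 ≤ lam ⟨0, hn⟩) (hneg : ∀ i : Fin n, i ≠ ⟨0, hn⟩ → lam i ≤ 0)
    (hsum : 0 ≤ ∑ i, lam i)
    (f : Polynomial ℝ) (hf : f = ∏ i, (X - C (lam i)))
    (Cmat : Matrix (Fin n) (Fin n) ℝ)
    (hC : ∀ i j : Fin n, Cmat i j =
      if (j : ℕ) = (i : ℕ) + 1 then 1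
      else if (i : ℕ) = n - 1 then -f.coeff (j : ℕ) else 0) :
    (∀ i j, 0 ≤ Cmat i j) ∧ Cmat.charpoly = f :=
  suleimanova_general n hn lam hneg hsum f hf Cmat hC
end
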